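/- arXiv:2101.07286 — 9 statements merged into one kernel-verified Lean document; each statement's English description precedes it below -/
import Mathlib

section
/- If A is an n×n real matrix with spectral radius at most 1 that converges to a limit A^∞ = lim_{k→∞} A^k, then for any μ strictly between γ(A) and 1, A is linearly convergent with rate μ, i.e., there exist M, N > 0 with ‖A^k − A^∞‖ ≤ M·μ^k for all k > N; moreover if A is linearly convergent with rate μ ∈ [0,1), then μ ≥ γ(A). Here γ(A) is the maximum modulus of eigenvalues of A other than 1 (and 0 if there are none). -/
/-!
Let `P = A^∞`. Passing to the limit in `A * A^k = A^k * A = A^(k+1)` gives `A P = P A = P = P²`,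
so `B = A - P` satisfies `B^k = A^k - P` for `k ≥ 1`, and `B^k → 0`. An eigenvector computation
shows that the nonzero spectrum of `B` is `σ(A) \ {1}` (the value `1` is excluded because
`B^k → 0`), so `γ(A)` is the spectral radius of `B`. Both claims are then about the growth of
`‖B^k‖`: by Gelfand's formula `‖B^k‖ = O(μ^k)` once `ρ(B) < μ`, and conversely `z ∈ σ(B)` gives
`|z|^k ≤ ‖B^k‖ · ‖1‖`, so `‖B^k‖ = O(μ^k)` forces `|z| ≤ μ`.
-/

attribute [local instance] Matrix.normedAddCommGroup

open Filter Asymptotics Topology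
open scoped Matrix.Norms.Elementwise

theorem norm_le_of_isBigO_pow {𝕜 : Type*} [NormedDivisionRing 𝕜] {z : 𝕜} {μ : ℝ}
    (hμ : 0 ≤ μ) (h : (fun k : ℕ => z ^ k) =O[atTop] (fun k => μ ^ k)) : ‖z‖ ≤ μ := by
  by_contra! hμz
  have hnorm : (fun k : ℕ => ‖z‖ ^ k) =O[atTop] (fun k => μ ^ k) := by
    simpa only [norm_pow] using h.norm_left
  exact isLittleO_irrefl (.of_forall fun k => pow_ne_zero k (hμ.trans_lt hμz).ne')
    (hnorm.trans_isLittleO (isLittleO_pow_pow_of_lt_left hμ hμz))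

section BanachAlgebra

variable {𝕜 𝔸 : Type*} [NormedField 𝕜] [NormedRing 𝔸] [NormedAlgebra 𝕜 𝔸]
  [CompleteSpace 𝔸]

theorem spectrum.isBigO_pow_of_mem {a : 𝔸} {z : 𝕜} (hz : z ∈ spectrum 𝕜 a) :
    (fun k : ℕ => z ^ k) =O[atTop] (fun k => a ^ k) :=
  .of_bound ‖(1 : 𝔸)‖ <| .of_forall fun k => by
    simpa only [mul_comm ‖(1 : 𝔸)‖] using norm_le_norm_mul_of_mem (pow_mem_pow a k hz)

end BanachAlgebra

section ComplexBanachAlgebra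

variable {𝔸 : Type*} [NormedRing 𝔸] [NormedAlgebra ℂ 𝔸] [CompleteSpace 𝔸]

theorem spectrum.isBigO_pow_of_spectralRadius_lt {a : 𝔸} {μ : ℝ}
    (h : spectralRadius ℂ a < ENNReal.ofReal μ) :
    (fun k : ℕ => a ^ k) =O[atTop] (fun k => μ ^ k) := by
  refine .of_bound' ?_
  filter_upwards [(pow_norm_pow_one_div_tendsto_nhds_spectralRadius a).eventually_lt_const h,
    eventually_ne_atTop 0] with k hk hk0
  obtain ⟨hroot, -⟩ := ENNReal.ofReal_lt_ofReal_iff'.mp hk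
  rw [one_div] at hroot
  calc ‖a ^ k‖ = (‖a ^ k‖ ^ (k : ℝ)⁻¹) ^ k :=
        (Real.rpow_inv_natCast_pow (norm_nonneg _) hk0).symm
    _ ≤ μ ^ k := pow_le_pow_left₀ (by positivity) hroot.le k
    _ ≤ ‖μ ^ k‖ := Real.le_norm_self _

theorem spectrum.isBigO_pow_of_forall_norm_le {a : 𝔸} {γ μ : ℝ}
    (hγ : ∀ z ∈ spectrum ℂ a, ‖z‖ ≤ γ) (hγ0 : 0 ≤ γ) (hγμ : γ < μ) :
    (fun k : ℕ => a ^ k) =O[atTop] (fun k => μ ^ k) := by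
  refine isBigO_pow_of_spectralRadius_lt (lt_of_le_of_lt (b := ENNReal.ofReal γ) ?_ ?_)
  · refine iSup₂_le fun z hz => ?_
    rw [← ENNReal.ofReal_coe_nnreal]
    exact ENNReal.ofReal_le_ofReal (hγ z hz)
  · exact (ENNReal.ofReal_lt_ofReal_iff (hγ0.trans_lt hγμ)).mpr hγμ

end ComplexBanachAlgebra

section PowLimit

theorem mul_pow_eq_left_of_mul_eq_left {M : Type*} [Monoid M] {a p : M} (h : p * a = p) (k : ℕ) :
    p * a ^ k = p := by
  induction k with
  | zero => rw [pow_zero, mul_one]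
  | succ k ih => rw [pow_succ, ← mul_assoc, ih, h]

theorem pow_mul_eq_right_of_mul_eq_right {M : Type*} [Monoid M] {a p : M} (h : a * p = p) (k : ℕ) :
    a ^ k * p = p := by
  induction k with
  | zero => rw [pow_zero, one_mul]
  | succ k ih => rw [pow_succ', mul_assoc, ih, h]

theorem sub_pow_eq_pow_sub {R : Type*} [Ring R] {a p : R} (hap : a * p = p)
    (hpa : p * a = p) (hp : IsIdempotentElem p) {k : ℕ} (hk : k ≠ 0) : (a - p) ^ k = a ^ k - p := by
  obtain ⟨k, rfl⟩ := Nat.exists_eq_succ_of_ne_zero hk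
  induction k with
  | zero => rw [pow_one, pow_one]
  | succ k ih =>
    rw [pow_succ, ih k.succ_ne_zero, sub_mul, mul_sub, mul_sub,
      pow_mul_eq_right_of_mul_eq_right hap, hpa, hp.eq, ← pow_succ]
    abel

variable {M : Type*} [Monoid M] [TopologicalSpace M] [ContinuousMul M] [T2Space M] {a p : M}

theorem mul_eq_right_of_tendsto_pow (h : Tendsto (a ^ ·) atTop (𝓝 p)) : a * p = p :=
  tendsto_nhds_unique (h.const_mul a) <| by
    simpa only [pow_succ'] using (tendsto_add_atTop_iff_nat 1).mpr h

theorem mul_eq_left_of_tendsto_pow (h : Tendsto (a ^ ·) atTop (𝓝 p)) : p * a = p :=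
  tendsto_nhds_unique (h.mul_const a) <| by
    simpa only [pow_succ] using (tendsto_add_atTop_iff_nat 1).mpr h

theorem isIdempotentElem_of_tendsto_pow (h : Tendsto (a ^ ·) atTop (𝓝 p)) :
    IsIdempotentElem p :=
  tendsto_nhds_unique (h.const_mul p) <| by
    simpa only [mul_pow_eq_left_of_mul_eq_left (mul_eq_left_of_tendsto_pow h)]
      using tendsto_const_nhds

end PowLimit

section PowLimitRing

variable {R : Type*} [Ring R] [TopologicalSpace R] [IsTopologicalRing R] [T2Space R] {a p : R}

theorem sub_pow_eventuallyEq_of_tendsto_pow (h : Tendsto (a ^ ·) atTop (𝓝 p)) :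
    (fun k => (a - p) ^ k) =ᶠ[atTop] fun k => a ^ k - p :=
  (eventually_ne_atTop 0).mono fun _ hk => sub_pow_eq_pow_sub (mul_eq_right_of_tendsto_pow h)
    (mul_eq_left_of_tendsto_pow h) (isIdempotentElem_of_tendsto_pow h) hk

theorem tendsto_sub_pow_zero_of_tendsto_pow (h : Tendsto (a ^ ·) atTop (𝓝 p)) :
    Tendsto ((a - p) ^ ·) atTop (𝓝 0) := by
  rw [← sub_self p]
  exact (h.sub_const p).congr' (sub_pow_eventuallyEq_of_tendsto_pow h).symm

end PowLimitRing

namespace Matrix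

section Field

variable {K n : Type*} [Field K] [Fintype n] [DecidableEq n]

theorem mem_spectrum_iff_exists_mulVec_eq_smul {M : Matrix n n K} {z : K} :
    z ∈ spectrum K M ↔ ∃ v ≠ 0, M *ᵥ v = z • v := by
  rw [← spectrum_toLin', ← Module.End.hasEigenvalue_iff_mem_spectrum,
    Module.End.hasEigenvalue_iff, Submodule.ne_bot_iff]
  simp only [Module.End.mem_eigenspace_iff, toLin'_apply, and_comm]

theorem mem_spectrum_sub_iff {A P : Matrix n n K} (hPA : P * A = P) (hP : IsIdempotentElem P)
    {z : K} (hz0 : z ≠ 0) (hz1 : z ≠ 1) : z ∈ spectrum K (A - P) ↔ z ∈ spectrum K A := by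
  simp only [mem_spectrum_iff_exists_mulVec_eq_smul]
  constructor
  · rintro ⟨v, hv, hBv⟩
    have hPv : P *ᵥ v = 0 := by
      have : z • P *ᵥ v = 0 := by
        rw [← mulVec_smul, ← hBv, mulVec_mulVec, mul_sub, hPA, hP.eq, sub_self, zero_mulVec]
      exact (smul_eq_zero.mp this).resolve_left hz0
    exact ⟨v, hv, by rwa [sub_mulVec, hPv, sub_zero] at hBv⟩
  · rintro ⟨v, hv, hAv⟩
    have hPv : P *ᵥ v = 0 := by
      have : (z - 1) • P *ᵥ v = 0 := by
        rw [sub_smul, one_smul, ← mulVec_smul, ← hAv, mulVec_mulVec, hPA, sub_self]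
      exact (smul_eq_zero.mp this).resolve_left (sub_ne_zero.mpr hz1)
    exact ⟨v, hv, by rw [sub_mulVec, hPv, sub_zero, hAv]⟩

theorem insert_zero_spectrum_sub {A P : Matrix n n K} (hPA : P * A = P) (hP : IsIdempotentElem P)
    (h1 : 1 ∉ spectrum K (A - P)) :
    insert 0 (spectrum K (A - P)) = insert 0 (spectrum K A \ {1}) := by
  ext z
  rcases eq_or_ne z 0 with rfl | hz0
  · simp
  rcases eq_or_ne z 1 with rfl | hz1
  · simp [h1]
  simp [hz0, hz1, mem_spectrum_sub_iff hPA hP hz0 hz1]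

end Field

section Complex

variable {n : Type*} [Fintype n] [DecidableEq n]

/-- The entrywise norm is not submultiplicative; transporting to operators on `ℂⁿ` gives a
complex Banach algebra in which Gelfand's formula applies, at the cost of constants only. -/
theorem isTheta_toEuclideanCLM {α : Type*} {l : Filter α} (f : α → Matrix n n ℂ) :
    f =Θ[l] fun x => toEuclideanCLM (n := n) (𝕜 := ℂ) (f x) :=
  let e := (toEuclideanCLM (n := n) (𝕜 := ℂ)).toAlgEquiv.toLinearEquiv.toContinuousLinearEquiv
  ⟨e.isBigO_comp_rev f l, e.isBigO_comp f l⟩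

theorem isBigO_pow_of_forall_norm_le {M : Matrix n n ℂ} {γ μ : ℝ}
    (hγ : ∀ z ∈ spectrum ℂ M, ‖z‖ ≤ γ) (hγ0 : 0 ≤ γ) (hγμ : γ < μ) :
    (fun k : ℕ => M ^ k) =O[atTop] fun k => μ ^ k := by
  have hspec : spectrum ℂ (toEuclideanCLM (n := n) (𝕜 := ℂ) M) = spectrum ℂ M :=
    AlgEquiv.spectrum_eq _ _
  have h := spectrum.isBigO_pow_of_forall_norm_le (hspec ▸ hγ) hγ0 hγμ
  simp only [← map_pow] at h
  exact (isTheta_toEuclideanCLM fun k : ℕ => M ^ k).isBigO.trans h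

theorem isBigO_pow_of_mem_spectrum {M : Matrix n n ℂ} {z : ℂ} (hz : z ∈ spectrum ℂ M) :
    (fun k : ℕ => z ^ k) =O[atTop] fun k => M ^ k := by
  have hspec : spectrum ℂ (toEuclideanCLM (n := n) (𝕜 := ℂ) M) = spectrum ℂ M :=
    AlgEquiv.spectrum_eq _ _
  have h := spectrum.isBigO_pow_of_mem (hspec ▸ hz)
  simp only [← map_pow] at h
  exact h.trans (isTheta_toEuclideanCLM fun k : ℕ => M ^ k).isBigO_symm

theorem isTheta_pow_map_ofReal (X : Matrix n n ℝ) :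
    (fun k : ℕ => X.map (Complex.ofReal · : ℝ → ℂ) ^ k) =Θ[atTop] fun k => X ^ k :=
  .of_norm_eventuallyEq_norm <| .of_forall fun k => by
    change ‖Complex.ofRealHom.mapMatrix X ^ k‖ = ‖X ^ k‖
    rw [← map_pow]
    exact norm_map_eq _ _ Complex.norm_real

theorem isBigO_pow_of_forall_norm_le_map_ofReal {X : Matrix n n ℝ} {γ μ : ℝ}
    (hγ : ∀ z ∈ spectrum ℂ (X.map (Complex.ofReal · : ℝ → ℂ)), ‖z‖ ≤ γ) (hγ0 : 0 ≤ γ)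
    (hγμ : γ < μ) : (fun k : ℕ => X ^ k) =O[atTop] fun k => μ ^ k :=
  (isTheta_pow_map_ofReal X).isBigO_symm.trans (isBigO_pow_of_forall_norm_le hγ hγ0 hγμ)

theorem isBigO_pow_of_mem_spectrum_map_ofReal {X : Matrix n n ℝ} {z : ℂ}
    (hz : z ∈ spectrum ℂ (X.map (Complex.ofReal · : ℝ → ℂ))) :
    (fun k : ℕ => z ^ k) =O[atTop] fun k => X ^ k :=
  (isBigO_pow_of_mem_spectrum hz).trans (isTheta_pow_map_ofReal X).isBigO

theorem norm_lt_one_of_mem_spectrum_map_ofReal {X : Matrix n n ℝ} {z : ℂ}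
    (hz : z ∈ spectrum ℂ (X.map (Complex.ofReal · : ℝ → ℂ)))
    (hX : Tendsto (X ^ ·) atTop (𝓝 0)) : ‖z‖ < 1 :=
  tendsto_pow_atTop_nhds_zero_iff_norm_lt_one.mp
    ((isBigO_pow_of_mem_spectrum_map_ofReal hz).trans_tendsto hX)

theorem insert_zero_spectrum_map_sub_of_tendsto_pow {A P : Matrix n n ℝ}
    (h : Tendsto (A ^ ·) atTop (𝓝 P)) :
    insert 0 (spectrum ℂ ((A - P).map (Complex.ofReal · : ℝ → ℂ))) =
      insert 0 (spectrum ℂ (A.map (Complex.ofReal · : ℝ → ℂ)) \ {1}) := by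
  let φ : Matrix n n ℝ →+* Matrix n n ℂ := Complex.ofRealHom.mapMatrix
  have h1 : 1 ∉ spectrum ℂ (φ (A - P)) := fun h1 =>
    (norm_lt_one_of_mem_spectrum_map_ofReal h1 (tendsto_sub_pow_zero_of_tendsto_pow h)).ne
      norm_one
  change insert 0 (spectrum ℂ (φ (A - P))) = insert 0 (spectrum ℂ (φ A) \ {1})
  rw [map_sub] at h1 ⊢
  exact insert_zero_spectrum_sub (by rw [← map_mul, mul_eq_left_of_tendsto_pow h])
    ((isIdempotentElem_of_tendsto_pow h).map φ) h1

end Complex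

end Matrix

theorem isBigO_pow_iff_exists_pos_bound {E : Type*} [Norm E] {f : ℕ → E} {μ : ℝ}
    (hμ : 0 ≤ μ) :
    f =O[atTop] (fun k => μ ^ k) ↔
      ∃ M N : ℝ, 0 < M ∧ 0 < N ∧ ∀ k : ℕ, N < k → ‖f k‖ ≤ M * μ ^ k := by
  have hnorm (k : ℕ) : ‖μ ^ k‖ = μ ^ k := by rw [norm_pow, Real.norm_of_nonneg hμ]
  constructor
  · intro h
    obtain ⟨M, hM, hbound⟩ := h.exists_pos
    obtain ⟨K, hK⟩ := eventually_atTop.mp hbound.bound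
    refine ⟨M, K + 1, hM, by positivity, fun k hk => ?_⟩
    rw [← hnorm]
    exact hK k (by exact_mod_cast (lt_add_one (K : ℝ)).trans hk |>.le)
  · rintro ⟨M, N, -, -, hbound⟩
    refine .of_bound M ?_
    filter_upwards [eventually_gt_atTop ⌈N⌉₊] with k hk
    rw [hnorm]
    exact hbound k (Nat.lt_of_ceil_lt hk)

theorem convergent_matrix_linear_rate_general {n : ℕ} (A Ainf : Matrix (Fin n) (Fin n) ℝ)
    (hconv : Tendsto (fun k => A ^ k) atTop (nhds Ainf)) :
    (∀ μ : ℝ,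
      sSup (insert (0:ℝ)
        ((fun z : ℂ => ‖z‖) '' (spectrum ℂ (A.map (Complex.ofReal · : ℝ → ℂ)) \ {1}))) < μ →
      μ < 1 →
      ∃ M N : ℝ, 0 < M ∧ 0 < N ∧ ∀ k : ℕ, N < (k : ℝ) → ‖A ^ k - Ainf‖ ≤ M * μ ^ k)
    ∧ (∀ μ : ℝ, 0 ≤ μ → μ < 1 →
      (∃ M N : ℝ, 0 < M ∧ 0 < N ∧ ∀ k : ℕ, N < (k : ℝ) → ‖A ^ k - Ainf‖ ≤ M * μ ^ k) →
      sSup (insert (0:ℝ)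
        ((fun z : ℂ => ‖z‖) '' (spectrum ℂ (A.map (Complex.ofReal · : ℝ → ℂ)) \ {1}))) ≤ μ) := by
  have hB : (fun k => (A - Ainf) ^ k) =ᶠ[atTop] fun k => A ^ k - Ainf :=
    sub_pow_eventuallyEq_of_tendsto_pow hconv
  set σ := spectrum ℂ ((A - Ainf).map (Complex.ofReal · : ℝ → ℂ))
  have hS : insert (0 : ℝ)
      ((fun z : ℂ => ‖z‖) '' (spectrum ℂ (A.map (Complex.ofReal · : ℝ → ℂ)) \ {1})) =
      (‖·‖) '' insert 0 σ := by
    rw [Matrix.insert_zero_spectrum_map_sub_of_tendsto_pow hconv, Set.image_insert_eq, norm_zero]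
  have hbdd : BddAbove ((‖·‖) '' insert 0 σ) :=
    (((Matrix.finite_spectrum _).insert 0).image _).bddAbove
  rw [hS]
  refine ⟨fun μ hγμ _ => ?_, fun μ hμ0 _ hrate => ?_⟩
  · have hle : ∀ z ∈ insert 0 σ, ‖z‖ ≤ sSup ((‖·‖) '' insert 0 σ) :=
      fun z hz => le_csSup hbdd (Set.mem_image_of_mem (‖·‖) hz)
    have hγ0 : 0 ≤ sSup ((‖·‖) '' insert 0 σ) := norm_zero (E := ℂ) ▸ hle 0 (Set.mem_insert _ _)
    refine (isBigO_pow_iff_exists_pos_bound (hγ0.trans hγμ.le)).mp ?_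
    exact (Matrix.isBigO_pow_of_forall_norm_le_map_ofReal
      (fun z hz => hle z (Set.mem_insert_of_mem _ hz)) hγ0 hγμ).congr' hB .rfl
  · have hrate := ((isBigO_pow_iff_exists_pos_bound hμ0).mpr hrate).congr' hB.symm .rfl
    refine csSup_le ((Set.insert_nonempty _ _).image _) ?_
    simp only [Set.forall_mem_image, Set.forall_mem_insert, norm_zero, hμ0, true_and]
    exact fun z hz => norm_le_of_isBigO_pow hμ0
      ((Matrix.isBigO_pow_of_mem_spectrum_map_ofReal hz).trans hrate)

/-- Fact 2.12: a convergent matrix is linearly convergent with any rate strictly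
between the subdominant eigenvalue modulus `γ(A)` and `1`, and no rate below `γ(A)`
is achievable. -/
theorem convergent_matrix_linear_rate {n : ℕ} (A Ainf : Matrix (Fin n) (Fin n) ℝ)
    (hρ : ∀ z ∈ spectrum ℂ (A.map (Complex.ofReal · : ℝ → ℂ)), ‖z‖ ≤ 1)
    (hconv : Tendsto (fun k => A ^ k) atTop (nhds Ainf)) :
    (∀ μ : ℝ,
      sSup (insert (0:ℝ)
        ((fun z : ℂ => ‖z‖) '' (spectrum ℂ (A.map (Complex.ofReal · : ℝ → ℂ)) \ {1}))) < μ →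
      μ < 1 →
      ∃ M N : ℝ, 0 < M ∧ 0 < N ∧ ∀ k : ℕ, N < (k : ℝ) → ‖A ^ k - Ainf‖ ≤ M * μ ^ k)
    ∧ (∀ μ : ℝ, 0 ≤ μ → μ < 1 →
      (∃ M N : ℝ, 0 < M ∧ 0 < N ∧ ∀ k : ℕ, N < (k : ℝ) → ‖A ^ k - Ainf‖ ≤ M * μ ^ k) →
      sSup (insert (0:ℝ)
        ((fun z : ℂ => ‖z‖) '' (spectrum ℂ (A.map (Complex.ofReal · : ℝ → ℂ)) \ {1}))) ≤ μ) :=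
  convergent_matrix_linear_rate_general A Ainf hconv
end

section
/- Let α₁, α₂ ∈ (0,2) and θ ∈ (0, π/2]. Then the 2×2 matrix T₁ = [[1 − α₁sin²θ, α₁cos θ sin θ], [α₁(1−α₂)cos θ sin θ, (1−α₂)(1−α₁cos²θ)]] has operator norm strictly less than 1. -/
/-!
Writing `s = sin θ`, `c = cos θ` and `w = s a - c b`, the block factors as
`T₁ = diag(1, 1 - α₂) ∘ (I - α₁ u uᵀ)` with the unit vector `u = (s, -c)`, and each factor loses
an explicit square: `‖x‖² - ‖T₁ x‖² = α₁(2 - α₁) w² + α₂(2 - α₂)(b + α₁ c w)²`. For `x ≠ 0` and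
`s ≠ 0` the two squares cannot vanish together, so `‖T₁ x‖ < ‖x‖`; in finite dimension the operator
norm is attained on the unit sphere, which makes the inequality strict for `‖T₁‖` as well.
-/

open Matrix

namespace ContinuousLinearMap

variable {E F : Type*} [NormedAddCommGroup E] [NormedSpace ℝ E] [ProperSpace E] [Nontrivial E]
  [NormedAddCommGroup F] [NormedSpace ℝ F]

theorem exists_norm_eq_one_norm_apply_eq_opNorm (T : E →L[ℝ] F) :
    ∃ x : E, ‖x‖ = 1 ∧ ‖T x‖ = ‖T‖ := by
  obtain ⟨x, hx, hTx⟩ := ((isCompact_sphere (0 : E) 1).image T.continuous.norm).sSup_mem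
    ((NormedSpace.sphere_nonempty.mpr zero_le_one).image _)
  exact ⟨x, mem_sphere_zero_iff_norm.mp hx, hTx.trans T.sSup_sphere_eq_norm⟩

theorem opNorm_lt_of_norm_apply_lt (T : E →L[ℝ] F) {C : ℝ}
    (h : ∀ x : E, x ≠ 0 → ‖T x‖ < C * ‖x‖) : ‖T‖ < C := by
  obtain ⟨x, hx, hTx⟩ := T.exists_norm_eq_one_norm_apply_eq_opNorm
  have hx0 : x ≠ 0 := norm_ne_zero_iff.mp (hx ▸ one_ne_zero)
  simpa [hx, hTx] using h x hx0

end ContinuousLinearMap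

theorem EuclideanSpace.norm_sq_fin_two (x : EuclideanSpace ℝ (Fin 2)) :
    ‖x‖ ^ 2 = x 0 ^ 2 + x 1 ^ 2 := by
  simp [EuclideanSpace.norm_sq_eq, Fin.sum_univ_two]

theorem Matrix.norm_sq_toEuclideanCLM_fin_two (a b c d : ℝ) (x : EuclideanSpace ℝ (Fin 2)) :
    ‖toEuclideanCLM (𝕜 := ℝ) !![a, b; c, d] x‖ ^ 2
      = (a * x 0 + b * x 1) ^ 2 + (c * x 0 + d * x 1) ^ 2 := by
  simp [EuclideanSpace.norm_sq_eq, Fin.sum_univ_two, mulVec, dotProduct]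

theorem EuclideanSpace.fin_two_ne_zero_iff (x : EuclideanSpace ℝ (Fin 2)) :
    x ≠ 0 ↔ x 0 ≠ 0 ∨ x 1 ≠ 0 := by
  rw [← not_and_or, not_iff_not]
  refine ⟨fun hx => by simp [hx], fun ⟨h0, h1⟩ => ?_⟩
  ext i
  fin_cases i <;> assumption

theorem gap_block_norm_sq_defect (α₁ α₂ s c a b : ℝ) (hsc : s ^ 2 + c ^ 2 = 1) :
    a ^ 2 + b ^ 2 - ((1 - α₁ * s ^ 2) * a + α₁ * c * s * b) ^ 2
      - (α₁ * (1 - α₂) * c * s * a + (1 - α₂) * (1 - α₁ * c ^ 2) * b) ^ 2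
      = α₁ * (2 - α₁) * (s * a - c * b) ^ 2
        + α₂ * (2 - α₂) * (b + α₁ * c * (s * a - c * b)) ^ 2 := by
  linear_combination (-(α₁ ^ 2) * (s * a - c * b) ^ 2) * hsc

theorem gap_block_sum_sq_lt {α₁ α₂ s c a b : ℝ} (h1 : α₁ ∈ Set.Ioo (0 : ℝ) 2)
    (h2 : α₂ ∈ Set.Ioo (0 : ℝ) 2) (hs : s ≠ 0) (hsc : s ^ 2 + c ^ 2 = 1)
    (hab : a ≠ 0 ∨ b ≠ 0) :
    ((1 - α₁ * s ^ 2) * a + α₁ * c * s * b) ^ 2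
      + (α₁ * (1 - α₂) * c * s * a + (1 - α₂) * (1 - α₁ * c ^ 2) * b) ^ 2
      < a ^ 2 + b ^ 2 := by
  have hk₁ : 0 < α₁ * (2 - α₁) := mul_pos h1.1 (by linarith [h1.2])
  have hk₂ : 0 < α₂ * (2 - α₂) := mul_pos h2.1 (by linarith [h2.2])
  have hdefect := gap_block_norm_sq_defect α₁ α₂ s c a b hsc
  set w := s * a - c * b
  have hpos : 0 < α₁ * (2 - α₁) * w ^ 2 + α₂ * (2 - α₂) * (b + α₁ * c * w) ^ 2 := by
    rcases eq_or_ne w 0 with hw | hw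
    · have hb : b ≠ 0 := by
        rintro rfl
        have ha : a = 0 := (mul_eq_zero.mp (by simpa [w] using hw)).resolve_left hs
        simp [ha] at hab
      rw [hw]
      simpa using mul_pos hk₂ (pow_two_pos_of_ne_zero hb)
    · exact add_pos_of_pos_of_nonneg (mul_pos hk₁ (pow_two_pos_of_ne_zero hw)) (by positivity)
  linarith

/-- For `α₁, α₂ ∈ (0,2)` and `θ ∈ (0, π/2]`, the GAP block `T₁` has (ℓ²) operator
norm strictly less than one. -/
theorem gap_block_opNorm_lt_one (α₁ α₂ θ : ℝ)
    (h1 : α₁ ∈ Set.Ioo (0:ℝ) 2) (h2 : α₂ ∈ Set.Ioo (0:ℝ) 2)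
    (hθ : θ ∈ Set.Ioc 0 (Real.pi/2)) :
    ‖Matrix.toEuclideanCLM (𝕜 := ℝ)
      !![1 - α₁ * Real.sin θ ^ 2, α₁ * Real.cos θ * Real.sin θ;
         α₁ * (1 - α₂) * Real.cos θ * Real.sin θ,
         (1 - α₂) * (1 - α₁ * Real.cos θ ^ 2)]‖ < 1 := by
  have hs : Real.sin θ ≠ 0 :=
    (Real.sin_pos_of_pos_of_lt_pi hθ.1 (hθ.2.trans_lt (by linarith [Real.pi_pos]))).ne'
  refine ContinuousLinearMap.opNorm_lt_of_norm_apply_lt _ fun x hx => ?_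
  rw [one_mul]
  refine lt_of_pow_lt_pow_left₀ 2 (norm_nonneg x) ?_
  rw [Matrix.norm_sq_toEuclideanCLM_fin_two, EuclideanSpace.norm_sq_fin_two]
  exact gap_block_sum_sq_lt h1 h2 hs (Real.sin_sq_add_cos_sq θ)
    ((EuclideanSpace.fin_two_ne_zero_iff x).mp hx)
end

section
/- Let T be a nonexpansive linear map on ℝ² whose only fixed point is 0, and let α ∈ (0,1). Then the operator norm of S = (1−α)I + αT is strictly less than 1. -/
/-- If `T` is a nonexpansive linear map on ℝ² with unique fixed point `0` and
`α ∈ (0,1)`, then `‖(1-α)I + αT‖ < 1`. -/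
theorem averaged_nonexpansive_norm_lt_one
    (T : EuclideanSpace ℝ (Fin 2) →L[ℝ] EuclideanSpace ℝ (Fin 2))
    (hne : ∀ v, ‖T v‖ ≤ ‖v‖) (hfix : ∀ v, T v = v → v = 0)
    (α : ℝ) (hα : α ∈ Set.Ioo (0:ℝ) 1) :
    ‖(1 - α) • (ContinuousLinearMap.id ℝ (EuclideanSpace ℝ (Fin 2))) + α • T‖ < 1 := by
  obtain ⟨hα0, hα1⟩ := hα
  set S := (1 - α) • (ContinuousLinearMap.id ℝ (EuclideanSpace ℝ (Fin 2))) + α • T with hS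
  have hSv : ∀ v, S v = (1 - α) • v + α • (T v) := fun v => rfl
  -- pointwise strict bound on unit sphere
  have key : ∀ v : EuclideanSpace ℝ (Fin 2), ‖v‖ = 1 → ‖S v‖ < 1 := by
    intro v hv
    rw [hSv]
    have hTv : T v ≠ v := by
      intro h
      have := hfix v h
      rw [this, norm_zero] at hv
      exact one_ne_zero hv.symm
    have h1 : ‖v‖ ≤ 1 := le_of_eq hv
    have h2 : ‖T v‖ ≤ 1 := (hne v).trans h1
    exact norm_combo_lt_of_ne h1 h2 (Ne.symm hTv) (by linarith) hα0 (by ring)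
  -- compactness: max on sphere
  have hcpt : IsCompact (Metric.sphere (0 : EuclideanSpace ℝ (Fin 2)) 1) :=
    isCompact_sphere 0 1
  have hne' : (Metric.sphere (0 : EuclideanSpace ℝ (Fin 2)) 1).Nonempty :=
    ⟨EuclideanSpace.single 0 1, by simp [EuclideanSpace.norm_single]⟩
  obtain ⟨v0, hv0mem, hv0max⟩ := hcpt.exists_isMaxOn hne'
    ((continuous_norm.comp S.continuous).continuousOn)
  have hv0 : ‖v0‖ = 1 := by simpa using hv0mem
  have hc : ‖S v0‖ < 1 := key v0 hv0
  have hcnn : (0:ℝ) ≤ ‖S v0‖ := norm_nonneg _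
  refine lt_of_le_of_lt (ContinuousLinearMap.opNorm_le_bound S hcnn ?_) hc
  intro x
  rcases eq_or_ne x 0 with rfl | hx
  · simp
  · have hxn : ‖x‖ ≠ 0 := norm_ne_zero_iff.mpr hx
    have hunit : ‖(‖x‖⁻¹ • x)‖ = 1 := by
      rw [norm_smul, norm_inv, norm_norm, inv_mul_cancel₀ hxn]
    have hmem : (‖x‖⁻¹ • x) ∈ Metric.sphere (0 : EuclideanSpace ℝ (Fin 2)) 1 := by
      simpa using hunit
    have h3 : ‖S (‖x‖⁻¹ • x)‖ ≤ ‖S v0‖ := hv0max hmem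
    have hSx : ‖S (‖x‖⁻¹ • x)‖ = ‖x‖⁻¹ * ‖S x‖ := by
      rw [map_smul, norm_smul, norm_inv, norm_norm]
    rw [hSx] at h3
    have hxpos : (0:ℝ) < ‖x‖ := norm_pos_iff.mpr hx
    calc ‖S x‖ = ‖x‖ * (‖x‖⁻¹ * ‖S x‖) := by field_simp
      _ ≤ ‖x‖ * ‖S v0‖ := by nlinarith
      _ = ‖S v0‖ * ‖x‖ := mul_comm _ _
end

section
/- Let θ_F ∈ (0, π/2], α* = 2/(1 + sin θ_F), and α₁ = α₂ = α*. Then for any θ with θ_F ≤ θ ≤ π/2, the quantity f(θ) = (2 − 2α* + (α*)² cos²θ)/2 satisfies |f(θ)| ≤ α* − 1, and consequently the complex eigenvalues λ = f(θ) ± sqrt(f(θ)² − (1−α*)²) (interpreted with imaginary square root when the radicand is negative) have modulus exactly α* − 1 = (1 − sin θ_F)/(1 + sin θ_F). -/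
/-!
Write `s = sin θ_F`, so that `α* (1 + s) = 2`. Since `cos² θ ≤ cos² θ_F = 1 - s²`, the mean
`f = 1 - α* + α*² cos² θ / 2` lies between `1 - α*` and `1 - α* + α*(1 - s) = α* - 1`.
Hence the radicand `(1 - α*)² - f²` is nonnegative, and `f ± i √((1 - α*)² - f²)` has
squared modulus `f² + (1 - α*)² - f² = (1 - α*)²`.
-/

open Real

theorem Real.cos_sq_le_one_sub_sin_sq_of_le {θF θ : ℝ} (hθF : 0 ≤ θF) (hle : θF ≤ θ)
    (hθ : θ ≤ π / 2) : cos θ ^ 2 ≤ 1 - sin θF ^ 2 := by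
  rw [← cos_sq']
  have hcos : 0 ≤ cos θ := cos_nonneg_of_mem_Icc ⟨by linarith [pi_pos], hθ⟩
  exact pow_le_pow_left₀ hcos (cos_le_cos_of_nonneg_of_le_pi hθF (by linarith [pi_pos]) hle) 2

theorem abs_eigenvalue_mean_le {α s c : ℝ} (hα : α * (1 + s) = 2) (hc : c ^ 2 ≤ 1 - s ^ 2) :
    |(2 - 2 * α + α ^ 2 * c ^ 2) / 2| ≤ α - 1 := by
  have hmax : α ^ 2 * c ^ 2 ≤ 2 * (α * (1 - s)) := by
    calc α ^ 2 * c ^ 2 ≤ α ^ 2 * (1 - s ^ 2) := mul_le_mul_of_nonneg_left hc (sq_nonneg α)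
      _ = 2 * (α * (1 - s)) := by linear_combination (α * (1 - s)) * hα
  rw [abs_le]
  constructor <;> linarith [mul_nonneg (sq_nonneg α) (sq_nonneg c)]

theorem Complex.norm_eq_abs_of_eq_ofReal_add_or_sub_I_mul_sqrt {a r : ℝ} (h : a ^ 2 ≤ r ^ 2)
    {z : ℂ} (hz : z = a + I * (√(r ^ 2 - a ^ 2) : ℝ) ∨ z = a - I * (√(r ^ 2 - a ^ 2) : ℝ)) :
    ‖z‖ = |r| := by
  have hsum : a ^ 2 + √(r ^ 2 - a ^ 2) ^ 2 = r ^ 2 := by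
    rw [sq_sqrt (sub_nonneg.mpr h)]; ring
  rcases hz with rfl | rfl
  · rw [mul_comm, norm_add_mul_I, hsum, sqrt_sq_eq_abs]
  · rw [← norm_conj]
    simp only [map_sub, conj_ofReal, map_mul, conj_I, neg_mul, sub_neg_eq_add]
    rw [mul_comm, norm_add_mul_I, hsum, sqrt_sq_eq_abs]

/-- With `α₁ = α₂ = α* = 2/(1+sin θ_F)` and `θ_F ≤ θ ≤ π/2`, the block
eigenvalue mean `f(θ)` satisfies `|f(θ)| ≤ α* - 1`, and the corresponding complex
eigenvalues `f(θ) ± i√((1-α*)² - f(θ)²)` have modulus exactly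
`α* - 1 = (1 - sin θ_F)/(1 + sin θ_F)`. -/
theorem eigenvalue_modulus_at_optimal_params (θF αs θ f : ℝ)
    (hθF : θF ∈ Set.Ioc 0 (Real.pi/2)) (hαs : αs = 2/(1 + Real.sin θF))
    (hθ1 : θF ≤ θ) (hθ2 : θ ≤ Real.pi/2)
    (hf : f = (2 - 2*αs + αs^2 * Real.cos θ ^ 2)/2) :
    |f| ≤ αs - 1
    ∧ (∀ lam : ℂ,
        (lam = (f : ℂ) + Complex.I * (Real.sqrt ((1 - αs)^2 - f^2) : ℝ) ∨
         lam = (f : ℂ) - Complex.I * (Real.sqrt ((1 - αs)^2 - f^2) : ℝ)) →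
        ‖lam‖ = αs - 1)
    ∧ αs - 1 = (1 - Real.sin θF)/(1 + Real.sin θF) := by
  obtain ⟨hθF0, hθFle⟩ := hθF
  have hsin : 0 < 1 + sin θF := by
    linarith [sin_nonneg_of_nonneg_of_le_pi hθF0.le (hθFle.trans (by linarith [pi_pos]))]
  have hα : αs * (1 + sin θF) = 2 := by rw [hαs]; exact div_mul_cancel₀ _ hsin.ne'
  have hmean : |f| ≤ αs - 1 :=
    hf ▸ abs_eigenvalue_mean_le hα (cos_sq_le_one_sub_sin_sq_of_le hθF0.le hθ1 hθ2)
  have hr : |1 - αs| = αs - 1 := by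
    rw [abs_sub_comm]; exact abs_of_nonneg ((abs_nonneg f).trans hmean)
  refine ⟨hmean, fun lam hlam => ?_, ?_⟩
  · rw [← hr]
    exact Complex.norm_eq_abs_of_eq_ofReal_add_or_sub_I_mul_sqrt
      (sq_le_sq.mpr (hmean.trans hr.ge)) hlam
  · rw [hαs]; field_simp; ring
end

section
/- Let s ∈ (0,1), c > 0 with s² + c² = 1, α* = 2/(1+s), and suppose α₁ ≥ α₂ > 0. If both tr M ≤ 0 and det M ≥ 0, where tr M = (2/((1+s)α₁))(−α₁ − α₂ + α₂α₁c² + 2α₁s) and det M = (4s(1−s)/(α₁(1+s)²))(−α₁ − α₂ + α₁α₂(1+s)), then α₁ = α₂ = α*. Equivalently, if (α₁, α₂) ≠ (α*, α*) then M has an eigenvalue with strictly positive real part. -/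
/-- If `tr M ≤ 0` and `det M ≥ 0` for the GAP matrix `M` at the Friedrichs angle,
with `α₁ ≥ α₂ > 0`, then `α₁ = α₂ = α* = 2/(1+s)`. -/
theorem trM_detM_imp_optimal (s c αs α₁ α₂ : ℝ)
    (hs0 : 0 < s) (hs1 : s < 1) (hc0 : 0 < c) (hsc : s^2 + c^2 = 1)
    (hαs : αs = 2/(1+s)) (h12 : α₂ ≤ α₁) (h2 : 0 < α₂)
    (htr : (2/((1+s)*α₁)) * (-α₁ - α₂ + α₂*α₁*c^2 + 2*α₁*s) ≤ 0)
    (hdet : 0 ≤ (4*s*(1-s)/(α₁*(1+s)^2)) * (-α₁ - α₂ + α₁*α₂*(1+s))) :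
    α₁ = αs ∧ α₂ = αs := by
  have hA : 0 < α₁ := lt_of_lt_of_le h2 h12
  have hc2 : c^2 = 1 - s^2 := by linarith
  rw [hc2] at htr
  have ht' : -α₁ - α₂ + α₂*α₁*(1-s^2) + 2*α₁*s ≤ 0 := by
    by_contra h
    push_neg at h
    have hpos : 0 < 2/((1+s)*α₁) := by positivity
    nlinarith [mul_pos hpos h]
  have hd' : 0 ≤ -α₁ - α₂ + α₁*α₂*(1+s) := by
    by_contra h
    push_neg at h
    have hpos : 0 < 4*s*(1-s)/(α₁*(1+s)^2) := by
      apply div_pos (by nlinarith) (by positivity)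
    nlinarith [mul_neg_of_pos_of_neg hpos h]
  have hB : 2 ≤ α₂*(1+s) := by
    nlinarith [mul_pos hA hs0]
  have hAB : α₁ ≤ α₂ := by
    nlinarith [mul_pos hA (sub_pos.mpr hs1)]
  have hEq : α₁ = α₂ := le_antisymm hAB h12
  rw [hEq] at ht'
  have hB2 : α₂*(1+s) ≤ 2 := by
    nlinarith [mul_pos h2 (sub_pos.mpr hs1)]
  have h2eq : α₂*(1+s) = 2 := le_antisymm hB2 hB
  have hne : (1+s) ≠ 0 := by positivity
  have : α₂ = αs := by
    rw [hαs, eq_div_iff hne]; linarith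
  exact ⟨hEq.trans this, this⟩
end

section
/- Let S: ℝⁿ → ℝⁿ and suppose there exist c ∈ (0,1) and η > 0 such that ‖S(x) − Π(x)‖ ≤ c‖x − Π(x)‖ for all x ∈ B_η(x̄), where Π is the (well-defined, nonexpansive-on-this-ball) projection onto a closed set F with x̄ ∈ F. If ‖x₀ − x̄‖ ≤ δ := η(1−c)/2, then the iterates x_{k+1} = S(x_k) are well defined, remain in B_η(x̄), satisfy ‖x_k − Π(x_k)‖ ≤ δc^k, the sequence (Π(x_k)) is Cauchy with limit x* ∈ F, and ‖x_k − x*‖ ≤ δ·((1+c)/(1−c))·c^k for all k. -/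
open Filter

/-- Local contraction towards a closed set implies convergence of the iterates to a
point of the set with explicit linear rate. -/
theorem local_contraction_convergence {n : ℕ}
    (F : Set (EuclideanSpace ℝ (Fin n))) (hF : IsClosed F)
    (xbar : EuclideanSpace ℝ (Fin n)) (hxbar : xbar ∈ F)
    (P : EuclideanSpace ℝ (Fin n) → EuclideanSpace ℝ (Fin n))
    (η c : ℝ) (hη : 0 < η) (hc : c ∈ Set.Ioo (0:ℝ) 1)
    (hP : ∀ y ∈ Metric.closedBall xbar η, P y ∈ F ∧ ∀ z ∈ F, ‖y - P y‖ ≤ ‖y - z‖)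
    (S : EuclideanSpace ℝ (Fin n) → EuclideanSpace ℝ (Fin n))
    (hS : ∀ y ∈ Metric.closedBall xbar η, ‖S y - P y‖ ≤ c * ‖y - P y‖)
    (x : ℕ → EuclideanSpace ℝ (Fin n))
    (hx0 : ‖x 0 - xbar‖ ≤ η * (1 - c)/2)
    (hxrec : ∀ k, x (k+1) = S (x k)) :
    (∀ k, x k ∈ Metric.closedBall xbar η)
    ∧ (∀ k, ‖x k - P (x k)‖ ≤ (η * (1 - c)/2) * c ^ k)
    ∧ ∃ xstar ∈ F, Tendsto (fun k => P (x k)) atTop (nhds xstar)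
        ∧ ∀ k, ‖x k - xstar‖ ≤ (η * (1 - c)/2) * ((1 + c)/(1 - c)) * c ^ k := by
  obtain ⟨hc0, hc1⟩ := hc
  set δ : ℝ := η * (1 - c)/2 with hδdef
  have h1c : (0:ℝ) < 1 - c := by linarith
  have hδpos : 0 < δ := by positivity
  have hcknn : ∀ k : ℕ, 0 < c ^ k := fun k => pow_pos hc0 k
  have hckle : ∀ k : ℕ, c ^ k ≤ 1 := fun k => pow_le_one₀ hc0.le hc1.le
  -- main induction
  have key : ∀ k, x k ∈ Metric.closedBall xbar η ∧ ‖x k - P (x k)‖ ≤ δ * c ^ k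
      ∧ ‖x k - xbar‖ ≤ δ * (1 + (1 + c) * (1 - c ^ k) / (1 - c)) := by
    intro k
    induction k with
    | zero =>
      have hball : x 0 ∈ Metric.closedBall xbar η := by
        rw [Metric.mem_closedBall, dist_eq_norm]
        nlinarith
      refine ⟨hball, ?_, ?_⟩
      · have := (hP (x 0) hball).2 xbar hxbar
        simpa using this.trans hx0
      · simpa using hx0
    | succ k ih =>
      obtain ⟨hball, hd, hb⟩ := ih
      have hPkF : P (x k) ∈ F := (hP (x k) hball).1
      have h1 : ‖x (k+1) - P (x k)‖ ≤ δ * c ^ (k+1) := by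
        rw [hxrec k]
        calc ‖S (x k) - P (x k)‖ ≤ c * ‖x k - P (x k)‖ := hS (x k) hball
          _ ≤ c * (δ * c ^ k) := by nlinarith
          _ = δ * c ^ (k+1) := by ring
      have h2 : ‖x (k+1) - xbar‖ ≤ δ * (1 + (1 + c) * (1 - c ^ (k+1)) / (1 - c)) := by
        have t : ‖x (k+1) - xbar‖ ≤ ‖x (k+1) - P (x k)‖ + ‖x k - P (x k)‖ + ‖x k - xbar‖ := by
          have := norm_sub_le_norm_sub_add_norm_sub (x (k+1)) (P (x k)) xbar
          have h' := norm_sub_le_norm_sub_add_norm_sub (P (x k)) (x k) xbar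
          have h'' : ‖P (x k) - x k‖ = ‖x k - P (x k)‖ := norm_sub_rev _ _
          linarith
        have hA : δ * (1 + (1 + c) * (1 - c ^ (k+1)) / (1 - c))
            = δ * (1 + (1 + c) * (1 - c ^ k) / (1 - c)) + (1 + c) * (δ * c ^ k) := by
          field_simp
          ring
        have hck1 : δ * c ^ (k+1) = c * (δ * c ^ k) := by ring
        rw [hA]
        nlinarith
      have hball1 : x (k+1) ∈ Metric.closedBall xbar η := by
        rw [Metric.mem_closedBall, dist_eq_norm]
        have e1 : δ * (1 + (1 + c) / (1 - c)) = η := by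
          rw [hδdef]; field_simp; ring
        have e2 : (1 + c) * (1 - c ^ (k+1)) / (1 - c) ≤ (1 + c) / (1 - c) := by
          gcongr ?_ / (1 - c)
          nlinarith [hcknn (k+1)]
        have e4 : δ * (1 + (1 + c) * (1 - c ^ (k+1)) / (1 - c)) ≤ δ * (1 + (1 + c) / (1 - c)) := by
          nlinarith
        linarith
      refine ⟨hball1, ?_, h2⟩
      calc ‖x (k+1) - P (x (k+1))‖ ≤ ‖x (k+1) - P (x k)‖ := (hP (x (k+1)) hball1).2 _ hPkF
        _ ≤ δ * c ^ (k+1) := h1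
  have hball : ∀ k, x k ∈ Metric.closedBall xbar η := fun k => (key k).1
  have hd : ∀ k, ‖x k - P (x k)‖ ≤ δ * c ^ k := fun k => (key k).2.1
  refine ⟨hball, hd, ?_⟩
  -- geometric bound on consecutive projections
  have hstep : ∀ k, dist (P (x k)) (P (x (k+1))) ≤ (2 * δ * c) * c ^ k := by
    intro k
    have h1 : ‖x (k+1) - P (x k)‖ ≤ δ * (c * c ^ k) := by
      rw [hxrec k]
      calc ‖S (x k) - P (x k)‖ ≤ c * ‖x k - P (x k)‖ := hS (x k) (hball k)
        _ ≤ c * (δ * c ^ k) := by nlinarith [hd k]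
        _ = δ * (c * c ^ k) := by ring
    have h2 : ‖x (k+1) - P (x (k+1))‖ ≤ δ * (c * c ^ k) := by
      have := hd (k+1)
      calc ‖x (k+1) - P (x (k+1))‖ ≤ δ * c ^ (k+1) := this
        _ = δ * (c * c ^ k) := by ring
    rw [dist_eq_norm]
    calc ‖P (x k) - P (x (k+1))‖
        ≤ ‖P (x k) - x (k+1)‖ + ‖x (k+1) - P (x (k+1))‖ :=
          norm_sub_le_norm_sub_add_norm_sub _ _ _
      _ ≤ δ * (c * c ^ k) + δ * (c * c ^ k) := by
          rw [norm_sub_rev]; exact add_le_add h1 h2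
      _ = (2 * δ * c) * c ^ k := by ring
  have hcauchy : CauchySeq (fun k => P (x k)) :=
    cauchySeq_of_le_geometric c (2 * δ * c) hc1 hstep
  obtain ⟨xstar, hlim⟩ := cauchySeq_tendsto_of_complete hcauchy
  have hxstarF : xstar ∈ F :=
    hF.mem_of_tendsto hlim (Eventually.of_forall fun k => (hP (x k) (hball k)).1)
  refine ⟨xstar, hxstarF, hlim, fun k => ?_⟩
  have htail : dist (P (x k)) xstar ≤ (2 * δ * c) * c ^ k / (1 - c) :=
    dist_le_of_le_geometric_of_tendsto c (2 * δ * c) hc1 hstep hlim k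
  have t : ‖x k - xstar‖ ≤ ‖x k - P (x k)‖ + dist (P (x k)) xstar := by
    rw [dist_eq_norm]
    exact norm_sub_le_norm_sub_add_norm_sub _ _ _
  have : ‖x k - xstar‖ ≤ δ * c ^ k + (2 * δ * c) * c ^ k / (1 - c) := by
    linarith [hd k]
  calc ‖x k - xstar‖ ≤ δ * c ^ k + (2 * δ * c) * c ^ k / (1 - c) := this
    _ = δ * ((1 + c)/(1 - c)) * c ^ k := by field_simp; ring
end

section
/- Let (x_k) be a sequence in ℝⁿ, d: ℝⁿ → ℝ_{≥0}, and suppose there exist t ∈ ℕ, t ≥ 1, and μ̄ ∈ (0,1) such that d(x_{kt+n}) < μ̄^{kt}·d(x_n) for all k ≥ 1 and all n (whenever d(x_n) > 0). Then for any μ ∈ (μ̄, 1) there exists N ∈ ℕ such that d(x_k) ≤ μ^k for all k > N. -/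
/-!
In each residue class `r` mod `t`, either the sequence is never positive, or it is positive at
some index `m ≡ r`, and then every later index `j ≡ m` satisfies
`u j < μ̄ ^ (j - m) * u m = C * μ̄ ^ j`; since `μ̄ < μ`, eventually `C * μ̄ ^ j ≤ μ ^ j`.
There are only `t` residue classes, so these eventual bounds hold simultaneously.
-/

open Filter

lemma eventually_const_mul_pow_le_pow {c μ : ℝ} (hc : 0 ≤ c) (hcμ : c < μ) (C : ℝ) :
    ∀ᶠ k in atTop, C * c ^ k ≤ μ ^ k := by
  have hμ : 0 < μ := hc.trans_lt hcμ
  filter_upwards [((isLittleO_pow_pow_of_lt_left hc hcμ).const_mul_left C).bound one_pos]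
    with k hk
  rw [one_mul, Real.norm_eq_abs, Real.norm_of_nonneg (pow_pos hμ k).le] at hk
  exact (le_abs_self _).trans hk

section Decay

variable {u : ℕ → ℝ} {t : ℕ} {μbar μ : ℝ}

lemma le_mul_pow_of_decay (hμbar : 0 < μbar)
    (hdecay : ∀ m k : ℕ, 1 ≤ k → 0 < u m → u (k * t + m) < μbar ^ (k * t) * u m)
    {m j : ℕ} (hm : 0 < u m) (hmj : m < j) (hjm : j ≡ m [MOD t]) :
    u j ≤ u m / μbar ^ m * μbar ^ j := by
  obtain ⟨k, hk⟩ := (Nat.modEq_iff_dvd' hmj.le).1 hjm.symm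
  have hj : j = k * t + m := by rw [mul_comm]; omega
  have hk1 : 1 ≤ k := Nat.pos_of_ne_zero (by rintro rfl; omega)
  calc u j ≤ μbar ^ (k * t) * u m := hj ▸ (hdecay m k hk1 hm).le
    _ = u m / μbar ^ m * μbar ^ j := by
      rw [hj, pow_add]
      field_simp

lemma eventually_le_pow_of_modEq_of_decay (hμbar : 0 < μbar) (hμ : μbar < μ)
    (hdecay : ∀ m k : ℕ, 1 ≤ k → 0 < u m → u (k * t + m) < μbar ^ (k * t) * u m) (r : ℕ) :
    ∀ᶠ j in atTop, j ≡ r [MOD t] → u j ≤ μ ^ j := by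
  by_cases hpos : ∃ m, m ≡ r [MOD t] ∧ 0 < u m
  · obtain ⟨m, hmr, hm⟩ := hpos
    filter_upwards [eventually_gt_atTop m,
      eventually_const_mul_pow_le_pow hμbar.le hμ (u m / μbar ^ m)] with j hmj hj hjr
    exact (le_mul_pow_of_decay hμbar hdecay hm hmj (hjr.trans hmr.symm)).trans hj
  · push Not at hpos
    filter_upwards with j hjr
    exact (hpos j hjr).trans (pow_pos (hμbar.trans hμ) j).le

lemma eventually_le_pow_of_decay (ht : 0 < t) (hμbar : 0 < μbar) (hμ : μbar < μ)
    (hdecay : ∀ m k : ℕ, 1 ≤ k → 0 < u m → u (k * t + m) < μbar ^ (k * t) * u m) :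
    ∀ᶠ j in atTop, u j ≤ μ ^ j := by
  filter_upwards [(eventually_all_finset (Finset.range t)).2
    fun r _ => eventually_le_pow_of_modEq_of_decay hμbar hμ hdecay r] with j hj
  exact hj (j % t) (Finset.mem_range.2 (Nat.mod_lt j ht)) (Nat.mod_modEq j t).symm

end Decay

theorem decay_along_progressions_imp_linear_general {n : ℕ}
    (x : ℕ → EuclideanSpace ℝ (Fin n)) (d : EuclideanSpace ℝ (Fin n) → ℝ)
    (t : ℕ) (ht : 1 ≤ t) (μbar : ℝ) (hμbar : μbar ∈ Set.Ioo (0:ℝ) 1)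
    (hdecay : ∀ m k : ℕ, 1 ≤ k → 0 < d (x m) →
      d (x (k * t + m)) < μbar ^ (k * t) * d (x m)) :
    ∀ μ : ℝ, μbar < μ → μ < 1 → ∃ N : ℕ, ∀ k > N, d (x k) ≤ μ ^ k := by
  intro μ hμ _
  obtain ⟨N, hN⟩ := eventually_atTop.1
    (eventually_le_pow_of_decay (u := fun j => d (x j)) ht hμbar.1 hμ hdecay)
  exact ⟨N, fun k hk => hN k hk.le⟩

/-- Geometric decay along arithmetic subprogressions of step `t` implies eventual
R-linear decay with any slightly worse rate `μ ∈ (μ̄, 1)`. -/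
theorem decay_along_progressions_imp_linear {n : ℕ}
    (x : ℕ → EuclideanSpace ℝ (Fin n)) (d : EuclideanSpace ℝ (Fin n) → ℝ)
    (hd : ∀ y, 0 ≤ d y) (t : ℕ) (ht : 1 ≤ t) (μbar : ℝ) (hμbar : μbar ∈ Set.Ioo (0:ℝ) 1)
    (hdecay : ∀ m k : ℕ, 1 ≤ k → 0 < d (x m) →
      d (x (k * t + m)) < μbar ^ (k * t) * d (x m)) :
    ∀ μ : ℝ, μbar < μ → μ < 1 → ∃ N : ℕ, ∀ k > N, d (x k) ≤ μ ^ k :=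
  decay_along_progressions_imp_linear_general x d t ht μbar hμbar hdecay
end

section
/- Let U, V ⊂ ℝⁿ be linear subspaces whose projections (in a suitable orthonormal basis D) are Π_U = blkdiag(I_p, 0_p, 0_{q−p}, 0_{n−p−q}) and Π_V = [[C², CS, 0, 0],[CS, S², 0, 0],[0, 0, I_{q−p}, 0],[0,0,0,0]] with C = diag(cos θ_i), S = diag(sin θ_i). Then Π_UΠ_V = [[C², CS, 0, 0],[0, 0_p, 0, 0],[0, 0, 0_{q−p}, 0],[0,0,0,0]] (in the same basis), and the eigenvalues of T = Π_U^{α₂}Π_V^{α₁} are: cos-angle block eigenvalues λ_i^{1,2} = f_i ± √(f_i² − (1−α₁)(1−α₂)) with f_i = (1/2)(2 − α₁ − α₂ + α₁α₂cos²θ_i), together with (1−α₂) with multiplicity q−p and (1−α₁)(1−α₂) with multiplicity n−p−q. -/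
open Matrix Polynomial

lemma det_fromBlocks_diagonal {p : ℕ} {R : Type*} [CommRing R]
    (a b c d : Fin p → R) :
    (Matrix.fromBlocks (diagonal a) (diagonal b) (diagonal c) (diagonal d)).det
      = ∏ i : Fin p, (a i * d i - b i * c i) := by
  let e : Fin p ⊕ Fin p ≃ Fin 2 × Fin p :=
    { toFun := Sum.elim (fun i => (0, i)) (fun i => (1, i))
      invFun := fun x => if x.1 = 0 then .inl x.2 else .inr x.2
      left_inv := by rintro (i | i) <;> simp
      right_inv := by rintro ⟨j, i⟩; fin_cases j <;> simp }
  have hM : Matrix.fromBlocks (diagonal a) (diagonal b) (diagonal c) (diagonal d)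
      = (Matrix.blockDiagonal (fun i => !![a i, b i; c i, d i])).submatrix e e := by
    ext x y
    rcases x with i | i <;> rcases y with j | j <;>
      · simp only [submatrix_apply, blockDiagonal_apply, fromBlocks_apply₁₁,
          fromBlocks_apply₁₂, fromBlocks_apply₂₁, fromBlocks_apply₂₂, Sum.elim_inl,
          Sum.elim_inr, diagonal_apply, e, Equiv.coe_fn_mk]
        rcases eq_or_ne i j with h | h <;> simp [h]
  rw [hM, Matrix.det_submatrix_equiv_self, Matrix.det_blockDiagonal]
  congr 1; ext i
  rw [Matrix.det_fin_two_of]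

lemma charmatrix_diagonal' {p : ℕ} {R : Type*} [CommRing R] (a : Fin p → R) :
    charmatrix (diagonal a) = diagonal (fun i => (X : R[X]) - C (a i)) := by
  ext i j
  rcases eq_or_ne i j with h | h <;> simp [charmatrix_apply, diagonal_apply, h]

lemma charpoly_diagonal_const {k : ℕ} (c : ℝ) :
    (diagonal (fun _ : Fin k => c)).charpoly = (X - C c) ^ k := by
  rw [Matrix.charpoly, charmatrix_diagonal', det_diagonal]
  simp

lemma quad_factor (a b c d e f : ℝ) (h1 : a + d = e) (h2 : a * d - b * c = f) :
    (X - C a) * (X - C d) - (-C b) * (-C c)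
      = X ^ 2 - C e * X + C f := by
  rw [← h1, ← h2, C_add, C_sub, C_mul, C_mul]; ring

/-- In the principal-angle basis, the projections onto subspaces `U` (dimension `p`)
and `V` (dimension `q = p + r`, with `m = n - p - q`) have the canonical block form;
then `Π_U Π_V` has the stated block form and the characteristic polynomial of
`T = Π_U^{α₂} Π_V^{α₁}` factors into the `2×2` principal-angle blocks together with
the eigenvalues `1-α₂` (multiplicity `q-p = r`) and `(1-α₁)(1-α₂)`
(multiplicity `n-p-q = m`). -/
theorem gap_operator_block_spectrum (p r m : ℕ) (α₁ α₂ : ℝ) (θ : Fin p → ℝ) :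
    letI ι := (Fin p ⊕ Fin p) ⊕ (Fin r ⊕ Fin m)
    let Cm : Matrix (Fin p) (Fin p) ℝ := Matrix.diagonal fun i => Real.cos (θ i)
    let Sm : Matrix (Fin p) (Fin p) ℝ := Matrix.diagonal fun i => Real.sin (θ i)
    let Pu : Matrix ι ι ℝ := Matrix.fromBlocks (Matrix.fromBlocks 1 0 0 0) 0 0 0
    let Pv : Matrix ι ι ℝ :=
      Matrix.fromBlocks (Matrix.fromBlocks (Cm*Cm) (Cm*Sm) (Cm*Sm) (Sm*Sm)) 0 0
        (Matrix.fromBlocks 1 0 0 0)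
    Pu * Pv
        = Matrix.fromBlocks (Matrix.fromBlocks (Cm*Cm) (Cm*Sm) 0 0) 0 0 0
    ∧ (((1-α₂) • (1 : Matrix ι ι ℝ) + α₂ • Pu) *
        ((1-α₁) • (1 : Matrix ι ι ℝ) + α₁ • Pv)).charpoly
        = (∏ i : Fin p,
            (X^2 - C (2 - α₁ - α₂ + α₁*α₂*Real.cos (θ i)^2) * X + C ((1-α₁)*(1-α₂))))
          * (X - C (1-α₂))^r * (X - C ((1-α₁)*(1-α₂)))^m := by
  intro Cm Sm Pu Pv
  constructor
  · simp [Pu, Pv, Matrix.fromBlocks_multiply]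
  · have key : ((1-α₂) • (1 : Matrix ((Fin p ⊕ Fin p) ⊕ (Fin r ⊕ Fin m))
          ((Fin p ⊕ Fin p) ⊕ (Fin r ⊕ Fin m)) ℝ) + α₂ • Pu) *
        ((1-α₁) • 1 + α₁ • Pv)
        = Matrix.fromBlocks
            (Matrix.fromBlocks
              (diagonal fun i => (1-α₁) + α₁ * (Real.cos (θ i) * Real.cos (θ i)))
              (diagonal fun i => α₁ * (Real.cos (θ i) * Real.sin (θ i)))
              (diagonal fun i => (1-α₂) * (α₁ * (Real.cos (θ i) * Real.sin (θ i))))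
              (diagonal fun i => (1-α₂) * ((1-α₁) + α₁ * (Real.sin (θ i) * Real.sin (θ i)))))
            0 0
            (Matrix.fromBlocks (diagonal fun _ => 1-α₂) 0 0
              (diagonal fun _ => (1-α₂) * (1-α₁))) := by
      have h1 : (1 : Matrix ((Fin p ⊕ Fin p) ⊕ (Fin r ⊕ Fin m))
            ((Fin p ⊕ Fin p) ⊕ (Fin r ⊕ Fin m)) ℝ)
          = Matrix.fromBlocks (Matrix.fromBlocks 1 0 0 1) 0 0 (Matrix.fromBlocks 1 0 0 1) := by
        simp [Matrix.fromBlocks_one]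
      rw [h1]
      simp only [Pu, Pv, Cm, Sm, Matrix.fromBlocks_smul, Matrix.fromBlocks_add,
        Matrix.fromBlocks_multiply, smul_zero, add_zero, zero_add, Matrix.mul_zero,
        Matrix.zero_mul, Matrix.mul_one, Matrix.one_mul, Matrix.smul_one_eq_diagonal,
        Matrix.diagonal_mul_diagonal, ← Matrix.diagonal_smul, Matrix.diagonal_add]
      congr 3 <;> funext i <;> simp <;> ring
    rw [key, Matrix.charpoly_fromBlocks_zero₂₁, Matrix.charpoly_fromBlocks_zero₂₁,
      charpoly_diagonal_const, charpoly_diagonal_const]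
    have hTL : (Matrix.fromBlocks
          (diagonal fun i => (1-α₁) + α₁ * (Real.cos (θ i) * Real.cos (θ i)))
          (diagonal fun i => α₁ * (Real.cos (θ i) * Real.sin (θ i)))
          (diagonal fun i => (1-α₂) * (α₁ * (Real.cos (θ i) * Real.sin (θ i))))
          (diagonal fun i => (1-α₂) * ((1-α₁) + α₁ * (Real.sin (θ i) * Real.sin (θ i))))).charpoly
        = ∏ i : Fin p,
            (X^2 - C (2 - α₁ - α₂ + α₁*α₂*Real.cos (θ i)^2) * X + C ((1-α₁)*(1-α₂))) := by
      rw [Matrix.charpoly, charmatrix_fromBlocks, charmatrix_diagonal', charmatrix_diagonal']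
      rw [show ((diagonal fun i => α₁ * (Real.cos (θ i) * Real.sin (θ i))).map
          (C : ℝ → ℝ[X])) = diagonal fun i => C (α₁ * (Real.cos (θ i) * Real.sin (θ i))) from
          diagonal_map (map_zero _),
        show ((diagonal fun i => (1-α₂) * (α₁ * (Real.cos (θ i) * Real.sin (θ i)))).map
          (C : ℝ → ℝ[X])) = diagonal fun i =>
            C ((1-α₂) * (α₁ * (Real.cos (θ i) * Real.sin (θ i)))) from diagonal_map (map_zero _),
        Matrix.diagonal_neg, Matrix.diagonal_neg, det_fromBlocks_diagonal]
      refine Finset.prod_congr rfl fun i _ => ?_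
      have hs : Real.sin (θ i) ^ 2 + Real.cos (θ i) ^ 2 = 1 := Real.sin_sq_add_cos_sq (θ i)
      exact quad_factor _ _ _ _ _ _
        (by linear_combination ((1-α₂)*α₁) * hs)
        (by linear_combination ((1-α₂)*(1-α₁)*α₁) * hs)
    rw [hTL, show (1-α₂)*(1-α₁) = (1-α₁)*(1-α₂) from mul_comm _ _, mul_assoc]
end

section
/- Let T = Π_U^{α₂}Π_V^{α₁} be the GAP operator for subspaces U, V ⊂ ℝⁿ with p = dim U, q = dim V, s = dim(U ∩ V). Then the multiset of eigenvalues of T is: {1} with multiplicity s, {(1−α₁)(1−α₂)} with multiplicity s + n − p − q, {1−α₂} with multiplicity max(0, q−p), {1−α₁} with multiplicity max(0, p−q), and the pairs λ_i^{1,2} = f_i ± √(f_i² − (1−α₁)(1−α₂)), f_i = (1/2)(2 − α₁ − α₂ + α₁α₂cos²θ_i), for each nonzero principal angle θ_i, i = s+1, …, min(p,q). The case p + q ≥ n reduces to p + q < n by embedding ℝⁿ into ℝ^{n+k}: if T̄ = blkdiag(T, (1−α₁)(1−α₂)I_k) then spectrum(T̄) = spectrum(T) ∪ {(1−α₁)(1−α₂)}^k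 as multisets. -/
/-!
Write `a = 1 - α₂`, `b = 1 - α₁`. For `x ∉ {ab, a, b}` the matrix `x - T` factors as
`((x - ab) - bα₂ P) (1 - w P Q) (1 - β Q)` with `β = α₁a / (x - ab)` and
`w = α₁α₂x / ((x - a)(x - b))`. The determinant of `λ + μ P` with `P` idempotent is read
off from the rank of `P`, and `det (1 - w P Q) = ∏ᵢ (1 - w cos² θᵢ)` is the reversed
characteristic polynomial of `P Q`, which is that of `P Q P`. Clearing denominators,
`(1 - w cos² θᵢ)(x - a)(x - b)` is the quadratic `x² - 2fᵢx + ab`, which splits as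
`(x - 1)(x - ab)` when `θᵢ = 0`. Both sides are polynomials agreeing at infinitely many `x`.
-/

open Matrix Polynomial

theorem Submodule.finrank_add_finrank_le_finrank_add_finrank_inf {K V : Type*} [DivisionRing K]
    [AddCommGroup V] [Module K V] [FiniteDimensional K V] (s t : Submodule K V) :
    Module.finrank K s + Module.finrank K t ≤ Module.finrank K V + Module.finrank K ↥(s ⊓ t) := by
  rw [← Submodule.finrank_sup_add_finrank_inf_eq]
  exact Nat.add_le_add_right (Submodule.finrank_le _) _

theorem Fin.prod_eq_pow_mul_prod_ite {M : Type*} [CommMonoid M] {m s : ℕ} (hs : s ≤ m)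
    {f : Fin m → M} {g : M} (hf : ∀ i : Fin m, (i : ℕ) < s → f i = g) :
    ∏ i, f i = g ^ s * ∏ i : Fin m, if s ≤ (i : ℕ) then f i else 1 := by
  calc ∏ i, f i = ∏ i : Fin m, (if (i : ℕ) < s then g else 1) * (if s ≤ (i : ℕ) then f i else 1) :=
        Finset.prod_congr rfl fun i _ => by
          by_cases hi : (i : ℕ) < s
          · rw [if_pos hi, if_neg (not_le.2 hi), mul_one, hf i hi]
          · rw [if_neg hi, if_pos (not_lt.1 hi), one_mul]
    _ = g ^ s * ∏ i : Fin m, if s ≤ (i : ℕ) then f i else 1 := by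
        rw [Finset.prod_mul_distrib, Finset.prod_ite, Finset.prod_const, Finset.prod_const_one,
          mul_one, Fin.card_filter_val_lt, min_eq_right hs]

theorem Polynomial.reverse_X_sub_C {R : Type*} [CommRing R] [Nontrivial R] (a : R) :
    (X - C a).reverse = 1 - C a * X := by
  have h1 : (1 : R[X]).reverse = 1 := by simpa using reverse_C (1 : R)
  have hX : (X : R[X]).reverse = 1 := by simpa [h1] using reverse_mul_X (1 : R[X])
  simpa [sub_eq_add_neg, hX] using reverse_add_C X (-a)

theorem Polynomial.reverse_X_pow_mul_prod_X_sub_C {R κ : Type*} [CommRing R] [IsDomain R]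
    (k : ℕ) (s : Finset κ) (c : κ → R) :
    (X ^ k * ∏ i ∈ s, (X - C (c i))).reverse = ∏ i ∈ s, (1 - C (c i) * X) := by
  rw [reverse_X_pow_mul]
  induction s using Finset.cons_induction with
  | empty => simpa using reverse_C (1 : R)
  | cons i s hi ih =>
    rw [Finset.prod_cons, reverse_mul_of_domain, ih, Finset.prod_cons, reverse_X_sub_C]

theorem Matrix.eval_charpolyRev_eq_det {R n : Type*} [CommRing R] [Fintype n] [DecidableEq n]
    (M : Matrix n n R) (t : R) : M.charpolyRev.eval t = (1 - t • M).det := by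
  rw [charpolyRev, ← coe_evalRingHom, RingHom.map_det]
  congr 1
  ext i j
  rcases eq_or_ne i j with rfl | hij <;> simp [*] <;> ring

theorem Matrix.charpoly_mul_mul_self_of_isIdempotentElem {R n : Type*} [CommRing R] [Fintype n]
    [DecidableEq n] {P : Matrix n n R} (hP : IsIdempotentElem P) (Q : Matrix n n R) :
    (P * Q * P).charpoly = (P * Q).charpoly := by
  rw [charpoly_mul_comm, ← Matrix.mul_assoc, hP.eq]

theorem Matrix.charpoly_fromBlocks_zero_smul_one {R m n : Type*} [CommRing R] [Fintype m]
    [DecidableEq m] [Fintype n] [DecidableEq n] (A : Matrix m m R) (c : R) :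
    (fromBlocks A 0 0 (c • (1 : Matrix n n R))).charpoly
      = A.charpoly * (X - C c) ^ Fintype.card n := by
  rw [charpoly_fromBlocks_zero₂₁, smul_one_eq_diagonal, charpoly_diagonal, Finset.prod_const,
    Finset.card_univ]

section GapOperator

variable {K : Type*} [Field K] {ι : Type*} [Fintype ι] [DecidableEq ι]

theorem Matrix.det_smul_one_add_smul_of_isIdempotentElem {P : Matrix ι ι K}
    (hP : IsIdempotentElem P) (a b : K) :
    (a • 1 + b • P).det = a ^ (Fintype.card ι - P.rank) * (a + b) ^ P.rank := by
  have hproj := LinearMap.IsIdempotentElem.isProj_range _ (hP.map Matrix.toLinAlgEquiv')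
  set f := Matrix.toLinAlgEquiv' P
  set e := f.range.prodEquivOfIsCompl (LinearMap.ker f) hproj.isCompl
  have hconj : Matrix.toLinAlgEquiv' (a • 1 + b • P) =
      e.conj (((a + b) • LinearMap.id : Module.End K f.range).prodMap (a • LinearMap.id)) := by
    have : ((a + b) • LinearMap.id : Module.End K f.range).prodMap
          (a • LinearMap.id : Module.End K (LinearMap.ker f))
        = a • LinearMap.id + b • LinearMap.prodMap LinearMap.id 0 := by
      ext x <;> simp [add_smul]
    rw [this, e.conj.map_add, e.conj.map_smul, e.conj.map_smul, LinearEquiv.conj_id,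
      ← hproj.eq_conj_prodMap, map_add, map_smul, map_smul, map_one]
    rfl
  have hrange : Module.finrank K f.range = P.rank := rfl
  have hker : Module.finrank K (LinearMap.ker f) = Fintype.card ι - P.rank := by
    have := LinearMap.finrank_range_add_finrank_ker f
    rw [Module.finrank_fintype_fun_eq_card] at this
    omega
  rw [← LinearMap.det_toLin']
  change LinearMap.det (Matrix.toLinAlgEquiv' (a • 1 + b • P) : Module.End K (ι → K)) = _
  rw [hconj, LinearEquiv.conj_apply, LinearMap.comp_assoc, LinearMap.det_conj,
    LinearMap.det_prodMap, LinearMap.det_smul, LinearMap.det_smul, LinearMap.det_id,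
    LinearMap.det_id, hrange, hker, mul_one, mul_one, mul_comm]

def gapOperator (α₁ α₂ : K) (P Q : Matrix ι ι K) : Matrix ι ι K :=
  ((1 - α₂) • 1 + α₂ • P) * ((1 - α₁) • 1 + α₁ • Q)

theorem smul_one_sub_gapOperator_eq_mul {P Q : Matrix ι ι K} (hP : IsIdempotentElem P)
    (hQ : IsIdempotentElem Q) {α₁ α₂ x : K} (hxab : x ≠ (1 - α₁) * (1 - α₂))
    (hxa : x ≠ 1 - α₂) (hxb : x ≠ 1 - α₁) :
    x • 1 - gapOperator α₁ α₂ P Q =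
      ((x - (1 - α₁) * (1 - α₂)) • 1 - ((1 - α₁) * α₂) • P)
        * (1 - (α₁ * α₂ * x / ((x - (1 - α₁)) * (x - (1 - α₂)))) • (P * Q))
        * (1 - (α₁ * (1 - α₂) / (x - (1 - α₁) * (1 - α₂))) • Q) := by
  have hab : x - (1 - α₁) * (1 - α₂) ≠ 0 := sub_ne_zero.2 hxab
  have ha : x - (1 - α₂) ≠ 0 := sub_ne_zero.2 hxa
  have hb : x - (1 - α₁) ≠ 0 := sub_ne_zero.2 hxb
  have hPQQ : P * Q * Q = P * Q := by rw [Matrix.mul_assoc, hQ.eq]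
  simp only [gapOperator, Matrix.add_mul, Matrix.mul_add, Matrix.sub_mul, Matrix.mul_sub,
    Matrix.smul_mul, Matrix.mul_smul, Matrix.mul_one, Matrix.one_mul,
    ← Matrix.mul_assoc, hP.eq, hPQQ]
  match_scalars
  · ring
  · ring
  · simp only [mul_one, div_mul_cancel₀ _ hab]
  · have hM : (x - (1 - α₁) * (1 - α₂)) * 1 - (1 - α₁) * α₂ * 1 = x - (1 - α₁) := by ring
    have hba : x - (1 - α₂) * (1 - α₁) ≠ 0 := by rwa [mul_comm]
    rw [hM]
    field_simp
    ring

theorem det_smul_one_sub_gapOperator {P Q : Matrix ι ι K} (hP : IsIdempotentElem P)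
    (hQ : IsIdempotentElem Q) {α₁ α₂ x : K} (hxab : x ≠ (1 - α₁) * (1 - α₂))
    (hxa : x ≠ 1 - α₂) (hxb : x ≠ 1 - α₁) :
    (x • 1 - gapOperator α₁ α₂ P Q).det =
      (x - (1 - α₁) * (1 - α₂)) ^ (Fintype.card ι - P.rank) * (x - (1 - α₁)) ^ P.rank
        * ((x - (1 - α₂)) / (x - (1 - α₁) * (1 - α₂))) ^ Q.rank
        * (1 - (α₁ * α₂ * x / ((x - (1 - α₁)) * (x - (1 - α₂)))) • (P * Q)).det := by
  have hab : x - (1 - α₁) * (1 - α₂) ≠ 0 := sub_ne_zero.2 hxab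
  have hPdet : ((x - (1 - α₁) * (1 - α₂)) • 1 - ((1 - α₁) * α₂) • P).det =
      (x - (1 - α₁) * (1 - α₂)) ^ (Fintype.card ι - P.rank) * (x - (1 - α₁)) ^ P.rank := by
    rw [sub_eq_add_neg, ← neg_smul, det_smul_one_add_smul_of_isIdempotentElem hP]
    congr 2
    ring
  have hQdet : (1 - (α₁ * (1 - α₂) / (x - (1 - α₁) * (1 - α₂))) • Q).det =
      ((x - (1 - α₂)) / (x - (1 - α₁) * (1 - α₂))) ^ Q.rank := by
    rw [sub_eq_add_neg, ← neg_smul, ← one_smul K (1 : Matrix ι ι K),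
      det_smul_one_add_smul_of_isIdempotentElem hQ, one_pow, one_mul]
    congr 1
    rw [← sub_eq_add_neg, eq_div_iff hab, sub_mul, div_mul_cancel₀ _ hab]
    ring
  rw [smul_one_sub_gapOperator_eq_mul hP hQ hxab hxa hxb, det_mul, det_mul, hPdet, hQdet]
  ring

theorem charpoly_gapOperator_mul [Infinite K] {P Q : Matrix ι ι K} (hP : IsIdempotentElem P)
    (hQ : IsIdempotentElem Q) (α₁ α₂ : K) {κ : Type*} [Fintype κ] (c : κ → K)
    (hc : (P * Q).charpolyRev = ∏ i, (1 - C (c i) * X)) :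
    (gapOperator α₁ α₂ P Q).charpoly * (X - C ((1 - α₁) * (1 - α₂))) ^ Q.rank
        * ((X - C (1 - α₁)) * (X - C (1 - α₂))) ^ Fintype.card κ =
      (X - C ((1 - α₁) * (1 - α₂))) ^ (Fintype.card ι - P.rank) * (X - C (1 - α₁)) ^ P.rank
        * (X - C (1 - α₂)) ^ Q.rank
        * ∏ i, (X ^ 2 - C (2 - α₁ - α₂ + α₁ * α₂ * c i) * X + C ((1 - α₁) * (1 - α₂))) := by
  refine eq_of_infinite_eval_eq _ _ (Set.Infinite.mono (fun x hx => ?_)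
    (Set.toFinite {(1 - α₁) * (1 - α₂), 1 - α₂, 1 - α₁}).infinite_compl)
  simp only [Set.mem_compl_iff, Set.mem_insert_iff, Set.mem_singleton_iff, not_or] at hx
  obtain ⟨hxab, hxa, hxb⟩ := hx
  have hab : x - (1 - α₁) * (1 - α₂) ≠ 0 := sub_ne_zero.2 hxab
  have ha : x - (1 - α₂) ≠ 0 := sub_ne_zero.2 hxa
  have hb : x - (1 - α₁) ≠ 0 := sub_ne_zero.2 hxb
  simp only [Set.mem_ofPred_eq, eval_mul, eval_pow, eval_sub, eval_X, eval_C, eval_prod, eval_add]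
  rw [eval_charpoly, scalar_apply, ← smul_one_eq_diagonal,
    det_smul_one_sub_gapOperator hP hQ hxab hxa hxb]
  set w := α₁ * α₂ * x / ((x - (1 - α₁)) * (x - (1 - α₂)))
  have hdet : (1 - w • (P * Q)).det = ∏ i, (1 - c i * w) := by
    have := congrArg (eval w) hc
    simpa only [eval_charpolyRev_eq_det, eval_prod, eval_sub, eval_one, eval_mul, eval_C,
      eval_X] using this
  have hquad : ∀ i, (1 - c i * w) * ((x - (1 - α₁)) * (x - (1 - α₂))) =
      x ^ 2 - (2 - α₁ - α₂ + α₁ * α₂ * c i) * x + (1 - α₁) * (1 - α₂) := by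
    intro i
    simp only [w]
    field_simp
    ring
  rw [hdet]
  calc _ = (x - (1 - α₁) * (1 - α₂)) ^ (Fintype.card ι - P.rank) * (x - (1 - α₁)) ^ P.rank
        * (((x - (1 - α₂)) / (x - (1 - α₁) * (1 - α₂))) ^ Q.rank
          * (x - (1 - α₁) * (1 - α₂)) ^ Q.rank)
        * ((∏ i, (1 - c i * w)) * ((x - (1 - α₁)) * (x - (1 - α₂))) ^ Fintype.card κ) := by
        ring
    _ = _ := by
        rw [← mul_pow, div_mul_cancel₀ _ hab, ← Finset.card_univ (α := κ),
          Finset.prod_mul_pow_card]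
        simp only [hquad]

theorem charpoly_gapOperator [Infinite K] {P Q : Matrix ι ι K} (hP : IsIdempotentElem P)
    (hQ : IsIdempotentElem Q) (α₁ α₂ : K) {s : ℕ} (c : Fin (min P.rank Q.rank) → K)
    (hc : (P * Q).charpolyRev = ∏ i, (1 - C (c i) * X)) (hs : s ≤ min P.rank Q.rank)
    (hrank : P.rank + Q.rank ≤ Fintype.card ι + s)
    (hc_one : ∀ i : Fin (min P.rank Q.rank), (i : ℕ) < s → c i = 1) :
    (gapOperator α₁ α₂ P Q).charpoly
      = (X - 1) ^ s * (X - C ((1 - α₁) * (1 - α₂))) ^ (s + Fintype.card ι - P.rank - Q.rank)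
        * (X - C (1 - α₂)) ^ (Q.rank - P.rank) * (X - C (1 - α₁)) ^ (P.rank - Q.rank)
        * ∏ i : Fin (min P.rank Q.rank), (if s ≤ (i : ℕ) then
            X ^ 2 - C (2 - α₁ - α₂ + α₁ * α₂ * c i) * X + C ((1 - α₁) * (1 - α₂)) else 1) := by
  have hmain := charpoly_gapOperator_mul hP hQ α₁ α₂ c hc
  set A := X - C ((1 - α₁) * (1 - α₂))
  have hsplit : ∀ i : Fin (min P.rank Q.rank), (i : ℕ) < s →
      X ^ 2 - C (2 - α₁ - α₂ + α₁ * α₂ * c i) * X + C ((1 - α₁) * (1 - α₂)) = (X - 1) * A := by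
    intro i hi
    rw [hc_one i hi, mul_one, show 2 - α₁ - α₂ + α₁ * α₂ = 1 + (1 - α₁) * (1 - α₂) by ring,
      C_add, C_1]
    ring
  rw [Fintype.card_fin, Fin.prod_eq_pow_mul_prod_ite hs hsplit, mul_pow, mul_pow] at hmain
  set R := ∏ i : Fin (min P.rank Q.rank), if s ≤ (i : ℕ) then
    X ^ 2 - C (2 - α₁ - α₂ + α₁ * α₂ * c i) * X + C ((1 - α₁) * (1 - α₂)) else 1
  have hF : A ^ Q.rank * ((X - C (1 - α₁)) * (X - C (1 - α₂))) ^ min P.rank Q.rank ≠ 0 :=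
    mul_ne_zero (pow_ne_zero _ (X_sub_C_ne_zero _))
      (pow_ne_zero _ (mul_ne_zero (X_sub_C_ne_zero _) (X_sub_C_ne_zero _)))
  refine mul_right_cancel₀ hF ?_
  rw [mul_pow, ← mul_assoc, hmain]
  calc _ = (X - 1) ^ s * A ^ (s + Fintype.card ι - P.rank - Q.rank + Q.rank)
        * (X - C (1 - α₂)) ^ (Q.rank - P.rank + min P.rank Q.rank)
        * (X - C (1 - α₁)) ^ (P.rank - Q.rank + min P.rank Q.rank) * R := by
        rw [show s + Fintype.card ι - P.rank - Q.rank + Q.rank = Fintype.card ι - P.rank + s by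
            omega, show Q.rank - P.rank + min P.rank Q.rank = Q.rank by omega,
          show P.rank - Q.rank + min P.rank Q.rank = P.rank by omega]
        ring
    _ = _ := by ring

end GapOperator

/-- The eigenvalue multiset is encoded as a factorization of the characteristic polynomial, and
the principal angles through the spectrum of `P Q P`. -/
theorem gap_operator_all_eigenvalues_general (n p q s : ℕ) (α₁ α₂ : ℝ)
    (P Q : Matrix (Fin n) (Fin n) ℝ)
    (hPidem : P * P = P) (hQidem : Q * Q = Q)
    (hp : P.rank = p) (hq : Q.rank = q)
    (hs : Module.finrank ℝ
      ↥(LinearMap.range P.mulVecLin ⊓ LinearMap.range Q.mulVecLin) = s)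
    (θ : Fin (min p q) → ℝ)
    (hθzero : ∀ i : Fin (min p q), θ i = 0 ↔ (i : ℕ) < s)
    (hθchar : (P * Q * P).charpoly
      = X ^ (n - min p q) * ∏ i : Fin (min p q), (X - C (Real.cos (θ i) ^ 2))) :
    (((1-α₂) • (1 : Matrix (Fin n) (Fin n) ℝ) + α₂ • P) *
        ((1-α₁) • (1 : Matrix (Fin n) (Fin n) ℝ) + α₁ • Q)).charpoly
      = (X - 1)^s * (X - C ((1-α₁)*(1-α₂)))^(s + n - p - q)
        * (X - C (1-α₂))^(q - p) * (X - C (1-α₁))^(p - q)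
        * ∏ i : Fin (min p q),
            (if s ≤ (i : ℕ) then
              X^2 - C (2 - α₁ - α₂ + α₁*α₂*Real.cos (θ i)^2) * X + C ((1-α₁)*(1-α₂))
            else 1)
    ∧ ∀ (k : ℕ) (T' : Matrix (Fin n) (Fin n) ℝ),
        (Matrix.fromBlocks T' 0 0
          (((1-α₁)*(1-α₂)) • (1 : Matrix (Fin k) (Fin k) ℝ))).charpoly
        = T'.charpoly * (X - C ((1-α₁)*(1-α₂)))^k := by
  refine ⟨?_, fun k T' => by rw [charpoly_fromBlocks_zero_smul_one, Fintype.card_fin]⟩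
  subst hp hq
  have hsm : s ≤ min P.rank Q.rank := by
    rw [← hs]
    exact le_min (Submodule.finrank_mono inf_le_left) (Submodule.finrank_mono inf_le_right)
  have hrank : P.rank + Q.rank ≤ Fintype.card (Fin n) + s := by
    have := Submodule.finrank_add_finrank_le_finrank_add_finrank_inf
      (LinearMap.range P.mulVecLin) (LinearMap.range Q.mulVecLin)
    rwa [Module.finrank_fintype_fun_eq_card, hs] at this
  have hrev : (P * Q).charpolyRev = ∏ i, (1 - C (Real.cos (θ i) ^ 2) * X) := by
    rw [← reverse_charpoly, ← charpoly_mul_mul_self_of_isIdempotentElem hPidem, hθchar,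
      reverse_X_pow_mul_prod_X_sub_C]
  have h := charpoly_gapOperator hPidem hQidem α₁ α₂ _ hrev hsm hrank fun i hi => by
    rw [(hθzero i).2 hi, Real.cos_zero, one_pow]
  rwa [Fintype.card_fin] at h

/-- Full eigenvalue (multiset) description of the GAP operator
`T = Π_U^{α₂} Π_V^{α₁}` for two subspaces given by their orthogonal projection
matrices `P, Q` with `dim U = p`, `dim V = q`, `dim (U ∩ V) = s`, stated as a
factorization of the characteristic polynomial.  The principal angles `θ_i`,
`i < min p q`, are characterized spectrally via `P Q P`; `θ_i = 0` iff `i < s`.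
Also included is the embedding reduction: appending a scalar block
`(1-α₁)(1-α₂)·I_k` adds exactly `k` eigenvalues `(1-α₁)(1-α₂)`. -/
theorem gap_operator_all_eigenvalues (n p q s : ℕ) (α₁ α₂ : ℝ)
    (P Q : Matrix (Fin n) (Fin n) ℝ)
    (hPsymm : Pᵀ = P) (hPidem : P * P = P) (hQsymm : Qᵀ = Q) (hQidem : Q * Q = Q)
    (hp : P.rank = p) (hq : Q.rank = q)
    (hs : Module.finrank ℝ
      ↥(LinearMap.range P.mulVecLin ⊓ LinearMap.range Q.mulVecLin) = s)
    (θ : Fin (min p q) → ℝ) (hθmono : Monotone θ)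
    (hθrange : ∀ i, θ i ∈ Set.Icc 0 (Real.pi/2))
    (hθzero : ∀ i : Fin (min p q), θ i = 0 ↔ (i : ℕ) < s)
    (hθchar : (P * Q * P).charpoly
      = X ^ (n - min p q) * ∏ i : Fin (min p q), (X - C (Real.cos (θ i) ^ 2))) :
    (((1-α₂) • (1 : Matrix (Fin n) (Fin n) ℝ) + α₂ • P) *
        ((1-α₁) • (1 : Matrix (Fin n) (Fin n) ℝ) + α₁ • Q)).charpoly
      = (X - 1)^s * (X - C ((1-α₁)*(1-α₂)))^(s + n - p - q)
        * (X - C (1-α₂))^(q - p) * (X - C (1-α₁))^(p - q)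
        * ∏ i : Fin (min p q),
            (if s ≤ (i : ℕ) then
              X^2 - C (2 - α₁ - α₂ + α₁*α₂*Real.cos (θ i)^2) * X + C ((1-α₁)*(1-α₂))
            else 1)
    ∧ ∀ (k : ℕ) (T' : Matrix (Fin n) (Fin n) ℝ),
        (Matrix.fromBlocks T' 0 0
          (((1-α₁)*(1-α₂)) • (1 : Matrix (Fin k) (Fin k) ℝ))).charpoly
        = T'.charpoly * (X - C ((1-α₁)*(1-α₂)))^k :=
  gap_operator_all_eigenvalues_general n p q s α₁ α₂ P Q hPidem hQidem hp hq hs θ hθzero hθchar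
end
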